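/- Let n ∈ ℤ_{≥0}^r and 1 ≤ k ≤ r, and assume n and n + e_k are normal. Then for every m = 1,…,r: Λ*_{n,m}(z) = Λ*_{n+e_k,m}(z) − conj(α_n) Λ_{n+e_k,m}(z), where α_n = Φ_n(0). -/

import Mathlib

open MeasureTheory Polynomial

noncomputable section

/-- A system of measures on the unit circle: each `μ j` is a probability measure,
carried by the unit circle `∂𝔻 = {z : |z| = 1}`, with infinite support. -/
def MopucSystem {r : ℕ} (μ : Fin r → Measure ℂ) : Prop :=
  ∀ j, IsProbabilityMeasure (μ j) ∧ μ j ((Metric.sphere (0 : ℂ) 1)ᶜ) = 0 ∧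
    ∀ s : Set ℂ, s.Finite → μ j (sᶜ) ≠ 0

/-- The inner product `⟨P, Q⟩_μ = ∫ P(z)·conj (Q(z)) dμ(z)`. -/
def pip (μ : Measure ℂ) (P Q : Polynomial ℂ) : ℂ :=
  ∫ z, P.eval z * (starRingEnd ℂ) (Q.eval z) ∂μ

/-- `⟨P, z^p⟩_μ`. -/
def mip (μ : Measure ℂ) (P : Polynomial ℂ) (p : ℕ) : ℂ :=
  pip μ P (X ^ p)

/-- The moment `ν^p = ∫ z^p dμ(z)` for `p ∈ ℤ` (on the circle `z^{-m} = conj (z^m)`). -/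
def mom (μ : Measure ℂ) (p : ℤ) : ℂ :=
  ∫ z, z ^ p ∂μ

/-- The linear position of the pair `(j, q)` (with `q < n j`): `(∑_{i<j} n i) + q`.
This enumerates the pairs, in lexicographic order, by `0, 1, …, |n| − 1`. -/
def linIdx {r : ℕ} (n : Fin r → ℕ) (c : (j : Fin r) × Fin (n j)) : ℕ :=
  (∑ i ∈ Finset.univ.filter (fun i => i < c.1), n i) + (c.2 : ℕ)

/-- The moment matrix `M_n`: rows are indexed by pairs `(j, q)` with `1 ≤ j ≤ r`,
`0 ≤ q ≤ n j − 1`, columns by `p = 0, …, |n| − 1` (realized as pairs via the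
order-preserving enumeration `linIdx`), and the entry at `((j,q), p)` is `ν_j^{p−q}`. -/
def Mmat {r : ℕ} (μ : Fin r → Measure ℂ) (n : Fin r → ℕ) :
    Matrix ((j : Fin r) × Fin (n j)) ((j : Fin r) × Fin (n j)) ℂ :=
  Matrix.of fun rq c => mom (μ rq.1) ((linIdx n c : ℤ) - ((rq.2 : ℕ) : ℤ))

/-- The index `n` is normal if `det M_n ≠ 0`.  (For `n = 0` the matrix is empty and its
determinant is `1`, so `n = 0` is normal, matching the convention of the paper.) -/
def NormalIndex {r : ℕ} (μ : Fin r → Measure ℂ) (n : Fin r → ℕ) : Prop :=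
  (Mmat μ n).det ≠ 0

/-- A type II multiple orthogonal polynomial for the multi-index `n`. -/
def IsTypeII {r : ℕ} (μ : Fin r → Measure ℂ) (n : Fin r → ℕ) (P : Polynomial ℂ) : Prop :=
  P ≠ 0 ∧ P.degree ≤ ((∑ j, n j : ℕ) : WithBot ℕ) ∧
    ∀ j, ∀ p : ℕ, p < n j → mip (μ j) P p = 0

/-- A type II* multiple orthogonal polynomial for the multi-index `n`. -/
def IsTypeIIStar {r : ℕ} (μ : Fin r → Measure ℂ) (n : Fin r → ℕ) (P : Polynomial ℂ) : Prop :=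
  P ≠ 0 ∧ P.degree ≤ ((∑ j, n j : ℕ) : WithBot ℕ) ∧
    ∀ j, ∀ p : ℕ, 1 ≤ p → p ≤ n j → mip (μ j) P p = 0

/-- A type I multiple orthogonal polynomial for the multi-index `n`:
a nonzero vector of polynomials with `deg (L j) ≤ n j − 1` (so `L j = 0` when `n j = 0`),
and `∑_j ⟨L j, z^p⟩_j = 0` for `p = 0, …, |n| − 2`. -/
def IsTypeI {r : ℕ} (μ : Fin r → Measure ℂ) (n : Fin r → ℕ) (L : Fin r → Polynomial ℂ) : Prop :=
  L ≠ 0 ∧ (∀ j, (L j).degree < ((n j : ℕ) : WithBot ℕ)) ∧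
    ∀ p : ℕ, p + 2 ≤ ∑ j, n j → ∑ j, mip (μ j) (L j) p = 0

/-- A type I* multiple orthogonal polynomial for the multi-index `n`:
a nonzero vector of polynomials with `deg (L j) ≤ n j − 1`,
and `∑_j ⟨L j, z^p⟩_j = 0` for `p = 1, …, |n| − 1`. -/
def IsTypeIStar {r : ℕ} (μ : Fin r → Measure ℂ) (n : Fin r → ℕ) (L : Fin r → Polynomial ℂ) : Prop :=
  L ≠ 0 ∧ (∀ j, (L j).degree < ((n j : ℕ) : WithBot ℕ)) ∧
    ∀ p : ℕ, 1 ≤ p → p + 1 ≤ ∑ j, n j → ∑ j, mip (μ j) (L j) p = 0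

/-- `Φ_n`: the monic type II polynomial of degree exactly `|n|`. -/
def IsPhi {r : ℕ} (μ : Fin r → Measure ℂ) (n : Fin r → ℕ) (P : Polynomial ℂ) : Prop :=
  IsTypeII μ n P ∧ P.Monic ∧ P.natDegree = ∑ j, n j

/-- `Φ*_n`: the type II* polynomial with `Φ*_n(0) = 1`. -/
def IsPhiStar {r : ℕ} (μ : Fin r → Measure ℂ) (n : Fin r → ℕ) (P : Polynomial ℂ) : Prop :=
  IsTypeIIStar μ n P ∧ P.eval 0 = 1

/-- `Λ_n`: the type I vector normalized by `∑_j ⟨Λ_{n,j}, z^{|n|−1}⟩_j = 1`. -/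
def IsLambda {r : ℕ} (μ : Fin r → Measure ℂ) (n : Fin r → ℕ) (L : Fin r → Polynomial ℂ) : Prop :=
  IsTypeI μ n L ∧ ∑ j, mip (μ j) (L j) ((∑ i, n i) - 1) = 1

/-- `Λ*_n`: the type I* vector normalized by `∑_j ⟨Λ*_{n,j}, 1⟩_j = 1`. -/
def IsLambdaStar {r : ℕ} (μ : Fin r → Measure ℂ) (n : Fin r → ℕ) (L : Fin r → Polynomial ℂ) : Prop :=
  IsTypeIStar μ n L ∧ ∑ j, mip (μ j) (L j) 0 = 1

/-- The multi-index `n + e_k`. -/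
def eAdd {r : ℕ} (n : Fin r → ℕ) (k : Fin r) : Fin r → ℕ :=
  Function.update n k (n k + 1)

/-- The multi-index `n − e_k` (used only when `n k ≥ 1`). -/
def eSub {r : ℕ} (n : Fin r → ℕ) (k : Fin r) : Fin r → ℕ :=
  Function.update n k (n k - 1)

section AuxMOPUC

variable {μ : Measure ℂ}

lemma mopuc_ae_sphere (hs : μ (Metric.sphere (0:ℂ) 1)ᶜ = 0) :
    ∀ᵐ z ∂μ, z ∈ Metric.sphere (0:ℂ) 1 := by
  rw [MeasureTheory.ae_iff]
  exact hs

lemma mopuc_integrable (hp : IsProbabilityMeasure μ)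
    (hs : μ (Metric.sphere (0:ℂ) 1)ᶜ = 0) {f : ℂ → ℂ} (hf : Continuous f) :
    Integrable f μ := by
  obtain ⟨C, hC⟩ := (isCompact_sphere (0:ℂ) 1).exists_bound_of_continuousOn hf.continuousOn
  refine Integrable.mono' (integrable_const C) hf.aestronglyMeasurable ?_
  filter_upwards [mopuc_ae_sphere hs] with z hz using hC z hz

lemma mopuc_conj_eval_continuous (Q : Polynomial ℂ) :
    Continuous fun z : ℂ => (starRingEnd ℂ) (Q.eval z) :=
  Complex.continuous_conj.comp Q.continuous

lemma mom_conj (hs : μ (Metric.sphere (0:ℂ) 1)ᶜ = 0) (m : ℤ) :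
    (starRingEnd ℂ) (mom μ m) = mom μ (-m) := by
  unfold mom
  rw [← integral_conj]
  refine integral_congr_ae ?_
  filter_upwards [mopuc_ae_sphere hs] with z hz
  have hn : ‖z‖ = 1 := mem_sphere_zero_iff_norm.mp hz
  rw [map_zpow₀, ← Complex.inv_eq_conj hn, inv_zpow, ← zpow_neg]

lemma mip_monomial (hs : μ (Metric.sphere (0:ℂ) 1)ᶜ = 0) (q p : ℕ) :
    mip μ (Polynomial.X ^ q) p = mom μ ((q : ℤ) - (p : ℤ)) := by
  unfold mip pip mom
  refine integral_congr_ae ?_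
  filter_upwards [mopuc_ae_sphere hs] with z hz
  have hn : ‖z‖ = 1 := mem_sphere_zero_iff_norm.mp hz
  have hz0 : z ≠ 0 := by
    intro h; rw [h] at hn; simp at hn
  simp only [Polynomial.eval_pow, Polynomial.eval_X, map_pow, ← Complex.inv_eq_conj hn]
  rw [sub_eq_add_neg, zpow_add₀ hz0, zpow_natCast, zpow_neg, zpow_natCast, inv_pow]

lemma mopuc_eval_eq_sum_range {P : Polynomial ℂ} {N : ℕ}
    (hP : ∀ q, N ≤ q → P.coeff q = 0) (z : ℂ) :
    P.eval z = ∑ q ∈ Finset.range N, P.coeff q * z ^ q := by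
  rcases eq_or_ne P 0 with rfl | h
  · simp
  · have hlt : P.natDegree < N := by
      by_contra hc
      exact Polynomial.leadingCoeff_ne_zero.mpr h (hP _ (le_of_not_gt hc))
    exact Polynomial.eval_eq_sum_range' hlt z

lemma pip_eq_sum_left (hp : IsProbabilityMeasure μ)
    (hs : μ (Metric.sphere (0:ℂ) 1)ᶜ = 0) (P Q : Polynomial ℂ) (N : ℕ)
    (hP : ∀ q, N ≤ q → P.coeff q = 0) :
    pip μ P Q = ∑ q ∈ Finset.range N, P.coeff q * (starRingEnd ℂ) (mip μ Q q) := by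
  have key : ∀ q : ℕ, ∫ z, z ^ q * (starRingEnd ℂ) (Q.eval z) ∂μ
      = (starRingEnd ℂ) (mip μ Q q) := by
    intro q
    have : mip μ Q q = ∫ z, Q.eval z * (starRingEnd ℂ) (z ^ q) ∂μ := by
      simp [mip, pip]
    rw [this, ← integral_conj]
    refine integral_congr_ae (Filter.Eventually.of_forall fun z => ?_)
    simp only [map_mul, Complex.conj_conj]
    ring
  unfold pip
  calc ∫ z, P.eval z * (starRingEnd ℂ) (Q.eval z) ∂μ
      = ∫ z, ∑ q ∈ Finset.range N, P.coeff q * (z ^ q * (starRingEnd ℂ) (Q.eval z)) ∂μ := by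
        refine integral_congr_ae (Filter.Eventually.of_forall fun z => ?_)
        dsimp only
        rw [mopuc_eval_eq_sum_range hP z, Finset.sum_mul]
        exact Finset.sum_congr rfl fun q _ => by ring
    _ = ∑ q ∈ Finset.range N, ∫ z, P.coeff q * (z ^ q * (starRingEnd ℂ) (Q.eval z)) ∂μ := by
        refine integral_finset_sum _ fun q _ => ?_
        exact (mopuc_integrable hp hs
          (((continuous_pow q).mul (mopuc_conj_eval_continuous Q)))).const_mul _
    _ = ∑ q ∈ Finset.range N, P.coeff q * ∫ z, z ^ q * (starRingEnd ℂ) (Q.eval z) ∂μ := by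
        exact Finset.sum_congr rfl fun q _ => integral_const_mul _ _
    _ = ∑ q ∈ Finset.range N, P.coeff q * (starRingEnd ℂ) (mip μ Q q) :=
        Finset.sum_congr rfl fun q _ => by rw [key q]

lemma pip_eq_sum_right (hp : IsProbabilityMeasure μ)
    (hs : μ (Metric.sphere (0:ℂ) 1)ᶜ = 0) (P Q : Polynomial ℂ) (N : ℕ)
    (hQ : ∀ p, N ≤ p → Q.coeff p = 0) :
    pip μ P Q = ∑ p ∈ Finset.range N, (starRingEnd ℂ) (Q.coeff p) * mip μ P p := by
  unfold pip
  calc ∫ z, P.eval z * (starRingEnd ℂ) (Q.eval z) ∂μ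
      = ∫ z, ∑ p ∈ Finset.range N, (starRingEnd ℂ) (Q.coeff p) *
          (P.eval z * (starRingEnd ℂ) (z ^ p)) ∂μ := by
        refine integral_congr_ae (Filter.Eventually.of_forall fun z => ?_)
        dsimp only
        rw [mopuc_eval_eq_sum_range hQ z, map_sum, Finset.mul_sum]
        exact Finset.sum_congr rfl fun p _ => by rw [map_mul]; ring
    _ = ∑ p ∈ Finset.range N, ∫ z, (starRingEnd ℂ) (Q.coeff p) *
          (P.eval z * (starRingEnd ℂ) (z ^ p)) ∂μ := by
        refine integral_finset_sum _ fun p _ => ?_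
        exact (mopuc_integrable hp hs
          (P.continuous.mul (Complex.continuous_conj.comp (continuous_pow p)))).const_mul _
    _ = ∑ p ∈ Finset.range N, (starRingEnd ℂ) (Q.coeff p) * mip μ P p := by
        refine Finset.sum_congr rfl fun p _ => ?_
        rw [integral_const_mul]
        simp [mip, pip]

lemma mip_eq_sum (hp : IsProbabilityMeasure μ)
    (hs : μ (Metric.sphere (0:ℂ) 1)ᶜ = 0) (P : Polynomial ℂ) (p : ℕ) (N : ℕ)
    (hP : ∀ q, N ≤ q → P.coeff q = 0) :
    mip μ P p = ∑ q ∈ Finset.range N, P.coeff q * mom μ ((q : ℤ) - (p : ℤ)) := by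
  rw [mip, pip_eq_sum_left hp hs P (Polynomial.X ^ p) N hP]
  refine Finset.sum_congr rfl fun q _ => ?_
  rw [mip_monomial hs, mom_conj hs, neg_sub]

lemma mip_sub (hp : IsProbabilityMeasure μ)
    (hs : μ (Metric.sphere (0:ℂ) 1)ᶜ = 0) (P Q : Polynomial ℂ) (p : ℕ) :
    mip μ (P - Q) p = mip μ P p - mip μ Q p := by
  unfold mip pip
  rw [← integral_sub]
  · refine integral_congr_ae (Filter.Eventually.of_forall fun z => ?_)
    simp only [Polynomial.eval_sub]
    ring
  · exact mopuc_integrable hp hs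
      (P.continuous.mul (mopuc_conj_eval_continuous _))
  · exact mopuc_integrable hp hs
      (Q.continuous.mul (mopuc_conj_eval_continuous _))

lemma mip_C_mul (c : ℂ) (P : Polynomial ℂ) (p : ℕ) :
    mip μ (Polynomial.C c * P) p = c * mip μ P p := by
  unfold mip pip
  rw [← integral_const_mul]
  refine integral_congr_ae (Filter.Eventually.of_forall fun z => ?_)
  simp only [Polynomial.eval_mul, Polynomial.eval_C]
  ring

lemma mip_zero (p : ℕ) : mip μ 0 p = 0 := by
  simp [mip, pip]

lemma mip_C (hp : IsProbabilityMeasure μ) (c : ℂ) :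
    mip μ (Polynomial.C c) 0 = c := by
  unfold mip pip
  simp [Polynomial.eval_C]

end AuxMOPUC

section AuxLin

lemma mopuc_coeff_vanish {P : Polynomial ℂ} {N : ℕ}
    (h : P.degree < ((N : ℕ) : WithBot ℕ)) : ∀ q, N ≤ q → P.coeff q = 0 := by
  intro q hq
  exact Polynomial.coeff_eq_zero_of_degree_lt (lt_of_lt_of_le h (Nat.cast_le.mpr hq))

lemma linIdx_lt {r : ℕ} (n : Fin r → ℕ) (c : (j : Fin r) × Fin (n j)) :
    linIdx n c < ∑ j, n j := by
  unfold linIdx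
  have h1 : (∑ i ∈ Finset.univ.filter (fun i => i < c.1), n i) + (c.2 : ℕ)
      < (∑ i ∈ Finset.univ.filter (fun i => i < c.1), n i) + n c.1 := by
    exact Nat.add_lt_add_left c.2.2 _
  refine lt_of_lt_of_le h1 ?_
  have hnotmem : c.1 ∉ Finset.univ.filter (fun i => i < c.1) := by
    simp
  have : (∑ i ∈ Finset.univ.filter (fun i => i < c.1), n i) + n c.1
      = ∑ i ∈ insert c.1 (Finset.univ.filter (fun i => i < c.1)), n i := by
    rw [Finset.sum_insert hnotmem, add_comm]
  rw [this]
  exact Finset.sum_le_sum_of_subset (Finset.subset_univ _)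

lemma eAdd_sum {r : ℕ} (n : Fin r → ℕ) (k : Fin r) :
    ∑ j, eAdd n k j = (∑ j, n j) + 1 := by
  unfold eAdd
  rw [Finset.sum_update_of_mem (Finset.mem_univ k)]
  have h := Finset.add_sum_erase Finset.univ n (Finset.mem_univ k)
  have h2 : Finset.univ \ {k} = Finset.univ.erase k := by
    rw [Finset.erase_eq]
  rw [h2]
  omega

lemma eAdd_self {r : ℕ} (n : Fin r → ℕ) (k : Fin r) : eAdd n k k = n k + 1 :=
  Function.update_self k _ n

lemma eAdd_ne {r : ℕ} (n : Fin r → ℕ) {k j : Fin r} (h : j ≠ k) : eAdd n k j = n j :=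
  Function.update_of_ne h _ n

/-- Uniqueness: a vector satisfying the type I* orthogonality together with the
`p = 0` condition, with the right degree bounds, is zero when `n` is normal. -/
lemma typeIStar_unique {r : ℕ} (μ : Fin r → Measure ℂ) (hμ : MopucSystem μ)
    (n : Fin r → ℕ) (hnorm : NormalIndex μ n) (E : Fin r → Polynomial ℂ)
    (hdeg : ∀ j, (E j).degree < ((n j : ℕ) : WithBot ℕ))
    (horth : ∀ p : ℕ, p < ∑ j, n j → ∑ j, mip (μ j) (E j) p = 0) :
    ∀ j, E j = 0 := by
  classical
  set M := (Mmat μ n).conjTranspose with hM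
  set v : ((j : Fin r) × Fin (n j)) → ℂ := fun c => (E c.1).coeff c.2 with hv
  have hcz : ∀ j q, n j ≤ q → (E j).coeff q = 0 := fun j => mopuc_coeff_vanish (hdeg j)
  have hMv : M.mulVec v = 0 := by
    funext c
    have hp := horth (linIdx n c) (linIdx_lt n c)
    have hexp : ∀ j, mip (μ j) (E j) (linIdx n c)
        = ∑ q ∈ Finset.range (n j), (E j).coeff q * mom (μ j) ((q : ℤ) - (linIdx n c : ℤ)) :=
      fun j => mip_eq_sum (hμ j).1 (hμ j).2.1 _ _ _ (hcz j)
    have hsum : ∑ x : (j : Fin r) × Fin (n j), M c x * v x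
        = ∑ j, mip (μ j) (E j) (linIdx n c) := by
      rw [← Finset.univ_sigma_univ, Finset.sum_sigma]
      refine Finset.sum_congr rfl fun j _ => ?_
      rw [hexp j, ← Fin.sum_univ_eq_sum_range]
      refine Finset.sum_congr rfl fun q _ => ?_
      have hMc : M c ⟨j, q⟩ = mom (μ j) ((q : ℤ) - (linIdx n c : ℤ)) := by
        rw [hM, Matrix.conjTranspose_apply]
        show (starRingEnd ℂ) (mom (μ j) ((linIdx n c : ℤ) - (q : ℤ))) = _
        rw [mom_conj (hμ j).2.1, neg_sub]
      rw [hMc, hv, mul_comm]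
    show M.mulVec v c = 0
    rw [Matrix.mulVec, dotProduct, hsum, hp]
  have hdet : IsUnit M.det := by
    rw [hM, Matrix.det_conjTranspose]
    exact isUnit_iff_ne_zero.mpr (star_ne_zero.mpr hnorm)
  have hv0 : v = 0 := by
    have h1 := congrArg (fun w => M⁻¹.mulVec w) hMv
    rwa [Matrix.mulVec_mulVec, Matrix.nonsing_inv_mul M hdet, Matrix.one_mulVec,
      Matrix.mulVec_zero] at h1
  intro j
  ext q
  rcases lt_or_ge q (n j) with h | h
  · have := congrFun hv0 ⟨j, ⟨q, h⟩⟩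
    simpa [hv] using this
  · simp [hcz j q h]

end AuxLin

section AuxT

/-- Pairing `∑_j ∫ L_j conj(Φ)` expanded through the coefficients of `L`,
using type II orthogonality of `Φ`. -/
lemma pairing_eq_coeff_mul {r : ℕ} (μ : Fin r → Measure ℂ) (hμ : MopucSystem μ)
    (n : Fin r → ℕ) (k : Fin r) (Φ : Polynomial ℂ)
    (hΦorth : ∀ j, ∀ p : ℕ, p < n j → mip (μ j) Φ p = 0)
    (L : Fin r → Polynomial ℂ)
    (hLdeg : ∀ j, (L j).degree < ((eAdd n k j : ℕ) : WithBot ℕ)) :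
    ∑ j, pip (μ j) (L j) Φ
      = (L k).coeff (n k) * (starRingEnd ℂ) (mip (μ k) Φ (n k)) := by
  have hexp : ∀ j, pip (μ j) (L j) Φ = ∑ q ∈ Finset.range (eAdd n k j),
      (L j).coeff q * (starRingEnd ℂ) (mip (μ j) Φ q) :=
    fun j => pip_eq_sum_left (hμ j).1 (hμ j).2.1 _ _ _ (mopuc_coeff_vanish (hLdeg j))
  rw [Finset.sum_congr rfl fun j _ => hexp j]
  rw [Finset.sum_eq_single k]
  · rw [eAdd_self, Finset.sum_range_succ, Finset.sum_eq_zero, zero_add]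
    intro q hq
    rw [hΦorth k q (Finset.mem_range.mp hq), map_zero, mul_zero]
  · intro j _ hj
    rw [eAdd_ne n hj]
    refine Finset.sum_eq_zero fun q hq => ?_
    rw [hΦorth j q (Finset.mem_range.mp hq), map_zero, mul_zero]
  · intro h; exact absurd (Finset.mem_univ k) h

/-- Pairing `∑_j ∫ L_j conj(Φ)` expanded through the coefficients of `Φ`. -/
lemma pairing_eq_sum_phi {r : ℕ} (μ : Fin r → Measure ℂ) (hμ : MopucSystem μ)
    (Φ : Polynomial ℂ) (N : ℕ) (hΦc : ∀ p, N ≤ p → Φ.coeff p = 0)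
    (L : Fin r → Polynomial ℂ) :
    ∑ j, pip (μ j) (L j) Φ
      = ∑ p ∈ Finset.range N, (starRingEnd ℂ) (Φ.coeff p) * ∑ j, mip (μ j) (L j) p := by
  rw [Finset.sum_congr rfl fun j _ =>
    pip_eq_sum_right (hμ j).1 (hμ j).2.1 (L j) Φ N hΦc]
  rw [Finset.sum_comm]
  exact Finset.sum_congr rfl fun p _ => by rw [Finset.mul_sum]

end AuxT

/-- if `n` and `n + e_k` are normal, then for every `m`:
`Λ*_{n,m} = Λ*_{n+e_k,m} − conj(α_n) Λ_{n+e_k,m}` with `α_n = Φ_n(0)`. -/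
theorem szego_recurrence_typeIStar (r : ℕ) (hr : 0 < r) (μ : Fin r → Measure ℂ)
    (hμ : MopucSystem μ) (n : Fin r → ℕ) (k : Fin r)
    (hnorm : NormalIndex μ n) (hnorm' : NormalIndex μ (eAdd n k))
    (Φ : Polynomial ℂ) (hΦ : IsPhi μ n Φ)
    (Λs : Fin r → Polynomial ℂ)
    (hΛs : (n = 0 → Λs = 0) ∧ (n ≠ 0 → IsLambdaStar μ n Λs))
    (Λps : Fin r → Polynomial ℂ) (hΛps : IsLambdaStar μ (eAdd n k) Λps)
    (Λp : Fin r → Polynomial ℂ) (hΛp : IsLambda μ (eAdd n k) Λp) :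
    ∀ m, Λs m = Λps m - C ((starRingEnd ℂ) (Φ.eval 0)) * Λp m := by
  classical
  obtain ⟨⟨hΦnz, hΦdeg, hΦorth⟩, hΦmonic, hΦdegEq⟩ := hΦ
  obtain ⟨⟨hAnz, hAdeg, hAorth⟩, hAnorm⟩ := hΛps
  obtain ⟨⟨hBnz, hBdeg, hBorth⟩, hBnorm⟩ := hΛp
  have hsum' : ∑ j, eAdd n k j = (∑ j, n j) + 1 := eAdd_sum n k
  intro m
  rcases eq_or_ne n 0 with h0 | h0
  · -- degenerate case n = 0
    have hS0 : ∑ j, n j = 0 := by simp [h0]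
    have hΛs0 : Λs = 0 := hΛs.1 h0
    have hnj : ∀ j, n j = 0 := fun j => by rw [h0]; rfl
    have hα : Φ.eval 0 = 1 := by
      have hnd : Φ.natDegree = 0 := by rw [hΦdegEq, hS0]
      rw [← Polynomial.coeff_zero_eq_eval_zero, ← hnd]
      exact hΦmonic.coeff_natDegree
    have key : ∀ (L : Fin r → Polynomial ℂ),
        (∀ j, (L j).degree < ((eAdd n k j : ℕ) : WithBot ℕ)) →
        (∑ j, mip (μ j) (L j) 0 = 1) →
        (∀ j, L j = if j = k then 1 else 0) := by
      intro L hdeg hnorm1 j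
      have hne : ∀ i, i ≠ k → L i = 0 := by
        intro i hik
        have hdi : (L i).degree < ((0 : ℕ) : WithBot ℕ) := by
          have := hdeg i
          rwa [eAdd_ne n hik, hnj i] at this
        ext q
        simp only [Polynomial.coeff_zero]
        exact Polynomial.coeff_eq_zero_of_degree_lt
          (lt_of_lt_of_le hdi (Nat.cast_le.mpr (Nat.zero_le q)))
      have hLkC : L k = Polynomial.C ((L k).coeff 0) := by
        refine Polynomial.eq_C_of_degree_le_zero ?_
        have := hdeg k
        rw [eAdd_self, hnj k] at this
        exact Nat.WithBot.lt_one_iff_le_zero.mp (by exact_mod_cast this)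
      have hsum1 : mip (μ k) (L k) 0 = 1 := by
        rw [← hnorm1, Finset.sum_eq_single k]
        · intro i _ hik
          rw [hne i hik, mip_zero]
        · intro h; exact absurd (Finset.mem_univ k) h
      have hc : (L k).coeff 0 = 1 := by
        rw [← mip_C (μ := μ k) (hμ k).1 ((L k).coeff 0), ← hLkC, hsum1]
      rcases eq_or_ne j k with rfl | hjk
      · rw [if_pos rfl, hLkC, hc, Polynomial.C_1]
      · rw [if_neg hjk, hne j hjk]
    have hA := key Λps hAdeg hAnorm
    have hB := key Λp hBdeg (by rwa [hsum', hS0] at hBnorm)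
    rw [hΛs0, hα, map_one, Polynomial.C_1, one_mul, hA m, hB m, sub_self]
    rfl
  · -- main case n ≠ 0
    set S := ∑ j, n j with hS
    have hS1 : 1 ≤ S := by
      by_contra hcon
      push_neg at hcon
      have hSz : ∑ j, n j = 0 := by omega
      exact h0 (_root_.funext fun j =>
        Finset.sum_eq_zero_iff.mp hSz j (Finset.mem_univ j))
    obtain ⟨⟨hΛsnz, hΛsdeg, hΛsorth⟩, hΛsnorm⟩ := hΛs.2 h0
    set α := Φ.eval 0 with hαdef
    set w := mip (μ k) Φ (n k) with hwdef
    set a := (Λps k).coeff (n k) with hadef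
    set b := (Λp k).coeff (n k) with hbdef
    have hΦc : ∀ p, S + 1 ≤ p → Φ.coeff p = 0 := fun p hp =>
      Polynomial.coeff_eq_zero_of_natDegree_lt (by rw [hΦdegEq]; omega)
    -- first pairing: with Λps
    have ha : a * (starRingEnd ℂ) w = (starRingEnd ℂ) α := by
      have h1 := pairing_eq_coeff_mul μ hμ n k Φ hΦorth Λps hAdeg
      have h2 := pairing_eq_sum_phi μ hμ Φ (S + 1) hΦc Λps
      rw [h1] at h2
      rw [h2, Finset.sum_eq_single 0]
      · rw [hAnorm, mul_one, Polynomial.coeff_zero_eq_eval_zero]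
      · intro p hp hp0
        have hple : p < S + 1 := Finset.mem_range.mp hp
        rw [hAorth p (Nat.one_le_iff_ne_zero.mpr hp0) (by rw [hsum']; omega), mul_zero]
      · intro h; exact absurd (Finset.mem_range.mpr (Nat.succ_pos S)) h
    -- second pairing: with Λp
    have hb : b * (starRingEnd ℂ) w = 1 := by
      have h1 := pairing_eq_coeff_mul μ hμ n k Φ hΦorth Λp hBdeg
      have h2 := pairing_eq_sum_phi μ hμ Φ (S + 1) hΦc Λp
      rw [h1] at h2
      rw [h2, Finset.sum_eq_single S]
      · have hcS : Φ.coeff S = 1 := by rw [← hΦdegEq]; exact hΦmonic.coeff_natDegree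
        have hnormS : ∑ j, mip (μ j) (Λp j) S = 1 := by
          have := hBnorm
          rwa [hsum', Nat.add_sub_cancel] at this
        rw [hcS, hnormS, map_one, one_mul]
      · intro p hp hpS
        have hplt : p < S := by
          have := Finset.mem_range.mp hp; omega
        rw [hBorth p (by rw [hsum']; omega), mul_zero]
      · intro h; exact absurd (Finset.mem_range.mpr (by omega)) h
    have hw : (starRingEnd ℂ) w ≠ 0 := by
      intro h; rw [h, mul_zero] at hb; exact one_ne_zero hb.symm
    have hab : a = (starRingEnd ℂ) α * b := by
      have : a * (starRingEnd ℂ) w = ((starRingEnd ℂ) α * b) * (starRingEnd ℂ) w := by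
        rw [mul_assoc, hb, mul_one, ha]
      exact mul_right_cancel₀ hw this
    -- the candidate vector
    set D : Fin r → Polynomial ℂ :=
      fun j => Λps j - Polynomial.C ((starRingEnd ℂ) α) * Λp j with hD
    have hDdeg : ∀ j, (D j).degree < ((n j : ℕ) : WithBot ℕ) := by
      intro j
      rcases eq_or_ne j k with rfl | hjk
      · rw [(Polynomial.degree_lt_iff_coeff_zero _ _)]
        intro q hq
        rcases eq_or_lt_of_le hq with rfl | hlt
        · simp only [hD, Polynomial.coeff_sub, Polynomial.coeff_C_mul]
          rw [← hadef, ← hbdef, hab, sub_self]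
        · have hq1 : eAdd n j j ≤ q := by rw [eAdd_self]; omega
          simp only [hD, Polynomial.coeff_sub, Polynomial.coeff_C_mul]
          rw [mopuc_coeff_vanish (hAdeg j) q hq1,
            mopuc_coeff_vanish (hBdeg j) q hq1, mul_zero, sub_self]
      · have h1 : (Λps j).degree < ((n j : ℕ) : WithBot ℕ) := by
          have := hAdeg j; rwa [eAdd_ne n hjk] at this
        have h2 : (Polynomial.C ((starRingEnd ℂ) α) * Λp j).degree
            < ((n j : ℕ) : WithBot ℕ) := by
          have hb2 : (Λp j).degree < ((n j : ℕ) : WithBot ℕ) := by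
            have := hBdeg j; rwa [eAdd_ne n hjk] at this
          refine lt_of_le_of_lt ?_ hb2
          rcases eq_or_ne ((starRingEnd ℂ) α) 0 with h | h
          · simp [h]
          · exact le_of_eq (Polynomial.degree_C_mul h)
        exact lt_of_le_of_lt (Polynomial.degree_sub_le _ _) (max_lt h1 h2)
    have hmipD : ∀ j p, mip (μ j) (D j) p
        = mip (μ j) (Λps j) p - (starRingEnd ℂ) α * mip (μ j) (Λp j) p := by
      intro j p
      rw [hD]
      rw [mip_sub (hμ j).1 (hμ j).2.1, mip_C_mul]
    -- E := Λs - D vanishes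
    have hE : ∀ j, Λs j - D j = 0 := by
      refine typeIStar_unique μ hμ n hnorm _ ?_ ?_
      · intro j
        exact lt_of_le_of_lt (Polynomial.degree_sub_le _ _) (max_lt (hΛsdeg j) (hDdeg j))
      · intro p hp
        have hsplit : ∀ j, mip (μ j) (Λs j - D j) p
            = mip (μ j) (Λs j) p - mip (μ j) (D j) p :=
          fun j => mip_sub (hμ j).1 (hμ j).2.1 _ _ _
        rw [Finset.sum_congr rfl fun j _ => by rw [hsplit j, hmipD j]]
        rw [Finset.sum_sub_distrib, Finset.sum_sub_distrib, ← Finset.mul_sum]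
        rcases Nat.eq_zero_or_pos p with rfl | hp1
        · have hB0 : ∑ j, mip (μ j) (Λp j) 0 = 0 := hBorth 0 (by rw [hsum']; omega)
          rw [hΛsnorm, hAnorm, hB0, mul_zero, sub_zero, sub_self]
        · have h1 : ∑ j, mip (μ j) (Λs j) p = 0 := hΛsorth p hp1 (by omega)
          have h2 : ∑ j, mip (μ j) (Λps j) p = 0 := hAorth p hp1 (by rw [hsum']; omega)
          have h3 : ∑ j, mip (μ j) (Λp j) p = 0 := hBorth p (by rw [hsum']; omega)
          rw [h1, h2, h3, mul_zero, sub_zero, sub_self]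
    have hEm := hE m
    rw [sub_eq_zero] at hEm
    rw [hEm]
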